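/- arXiv:1702.05467 — 4 statements merged into one kernel-verified Lean document; each statement's English description precedes it below -/
import Mathlib

section
/- No squared-star can have 5 single faces in 5 different planes: for every squared-star E, the number of planes that contain exactly one face of E is at most 4. -/
open scoped Classical
noncomputable section

/-- The vertex set `V = {±1, ±2, ±3, ±4} ⊆ ℤ`. -/
def Vset : Finset ℤ := {1, -1, 2, -2, 3, -3, 4, -4}

/-- An edge of the graph `G₈`: an unordered pair `{u, v}` of elements of `V`
with `|u| ≠ |v|`. -/
def IsFace (e : Finset ℤ) : Prop :=
  ∃ u ∈ Vset, ∃ v ∈ Vset, |u| ≠ |v| ∧ e = {u, v}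

/-- A squared-star: the edge set of a cycle in `G₈`, i.e. a set of at least 3
edges of `G₈` such that every incident vertex is incident to exactly two edges
and any two edges are connected by a chain of successively intersecting edges. -/
def SquaredStar (E : Finset (Finset ℤ)) : Prop :=
  3 ≤ E.card ∧
  (∀ e ∈ E, IsFace e) ∧
  (∀ v : ℤ, (∃ e ∈ E, v ∈ e) → (E.filter fun e => v ∈ e).card = 2) ∧
  ∀ e ∈ E, ∀ f ∈ E,
    Relation.ReflTransGen (fun a b => a ∈ E ∧ b ∈ E ∧ (a ∩ b).Nonempty) e f

/-- The plane of an edge `{u, v}`: the unordered pair `{|u|, |v|}`. -/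
def planeOf (e : Finset ℤ) : Finset ℤ := e.image fun x => |x|

/-- The number of faces of `E` lying in the plane `P`. -/
def planeCount (E : Finset (Finset ℤ)) (P : Finset ℤ) : ℕ :=
  (E.filter fun e => planeOf e = P).card

/-- The signature of a squared-star: the multiset of the numbers of faces in
each plane containing at least one face. -/
def signatureOf (E : Finset (Finset ℤ)) : Multiset ℕ :=
  (E.image planeOf).val.map fun P => planeCount E P

/-- A plane containing exactly two faces of `E` is of adjacent type if those
two faces share a vertex. -/
def AdjacentType (E : Finset (Finset ℤ)) (P : Finset ℤ) : Prop :=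
  planeCount E P = 2 ∧
  ∃ e ∈ E, ∃ f ∈ E, e ≠ f ∧ planeOf e = P ∧ planeOf f = P ∧ (e ∩ f).Nonempty

/-- The number of doubled planes of `E` of adjacent type. -/
def adjDoubledCount (E : Finset (Finset ℤ)) : ℕ :=
  ((E.image planeOf).filter fun P => AdjacentType E P).card

/-- An element of the hyperoctahedral group: a bijection of `V` commuting with
the antipodal map. -/
def IsHyperOct (g : ℤ → ℤ) : Prop :=
  Set.BijOn g ↑Vset ↑Vset ∧ ∀ v ∈ Vset, g (-v) = -g v

/-- The action of a signed permutation on a set of faces. -/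
def actStar (g : ℤ → ℤ) (E : Finset (Finset ℤ)) : Finset (Finset ℤ) :=
  E.image fun e => e.image g

/-- Two squared-stars are equivalent if a signed permutation carries one to the
other. -/
def StarEquiv (E F : Finset (Finset ℤ)) : Prop :=
  ∃ g : ℤ → ℤ, IsHyperOct g ∧ F = actStar g E


/-! For `i ∈ {1, 2, 3, 4}`, the faces whose plane contains `i` are the faces through `i` or `-i`.
No face contains both, and a cycle has degree `0` or `2` at every vertex, so their number is
even. Hence the three planes through `i` cannot all be single: the non-single planes cover
`{1, 2, 3, 4}`, so there are at least two of them, leaving at most four single planes. -/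

open Finset

def planes : Finset (Finset ℤ) := {{1, 2}, {1, 3}, {1, 4}, {2, 3}, {2, 4}, {3, 4}}

lemma IsFace.planeOf_mem_planes {e : Finset ℤ} (h : IsFace e) : planeOf e ∈ planes := by
  obtain ⟨u, hu, v, hv, huv, rfl⟩ := h
  simp only [Vset, mem_insert, mem_singleton] at hu hv
  rcases hu with rfl | rfl | rfl | rfl | rfl | rfl | rfl | rfl <;>
    rcases hv with rfl | rfl | rfl | rfl | rfl | rfl | rfl | rfl <;>
    revert huv <;> decide

lemma mem_planeOf_iff {e : Finset ℤ} {i : ℤ} (hi : 0 ≤ i) : i ∈ planeOf e ↔ i ∈ e ∨ -i ∈ e := by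
  simp only [planeOf, mem_image, abs_eq hi]
  constructor
  · rintro ⟨x, hx, rfl | rfl⟩
    · exact Or.inl hx
    · exact Or.inr hx
  · rintro (h | h)
    · exact ⟨i, h, Or.inl rfl⟩
    · exact ⟨-i, h, Or.inr rfl⟩

lemma IsFace.neg_notMem_of_mem {e : Finset ℤ} (h : IsFace e) {v : ℤ} (hv : v ≠ 0)
    (hve : v ∈ e) : -v ∉ e := by
  obtain ⟨u, -, w, -, huw, rfl⟩ := h
  simp only [mem_insert, mem_singleton] at hve ⊢
  rintro (h | h) <;> rcases hve with rfl | rfl <;> subst_vars <;>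
    first | omega | simp_all [abs_neg]

namespace SquaredStar

variable {E : Finset (Finset ℤ)}

lemma even_degree (hE : SquaredStar E) (v : ℤ) : Even #{e ∈ E | v ∈ e} := by
  by_cases hv : ∃ e ∈ E, v ∈ e
  · rw [hE.2.2.1 v hv]; exact even_two
  · simp only [not_exists, not_and] at hv
    rw [filter_false_of_mem hv, card_empty]; exact .zero

lemma even_card_filter_mem_planeOf (hE : SquaredStar E) {i : ℤ} (hi : 0 < i) :
    Even #{e ∈ E | i ∈ planeOf e} := by
  rw [filter_congr fun e _ => mem_planeOf_iff hi.le, filter_or, card_union_of_disjoint]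
  · exact (hE.even_degree i).add (hE.even_degree (-i))
  · exact disjoint_filter.2 fun e he hie hnie =>
      (hE.2.1 e he).neg_notMem_of_mem hi.ne' hie hnie

end SquaredStar

lemma Finset.card_le_mul_card_of_subset_biUnion {α : Type*} [DecidableEq α] {A : Finset α}
    {N : Finset (Finset α)} {k : ℕ} (hN : ∀ P ∈ N, #P ≤ k) (hA : A ⊆ N.biUnion id) :
    #A ≤ k * #N :=
  calc #A ≤ #(N.biUnion id) := card_le_card hA
    _ ≤ ∑ P ∈ N, #P := card_biUnion_le
    _ ≤ #N • k := sum_le_card_nsmul N _ k hN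
    _ = k * #N := by rw [smul_eq_mul, mul_comm]

lemma card_eq_two_of_mem_planes : ∀ P ∈ planes, #P = 2 := by decide

lemma card_planes_filter_mem {i : ℤ} (h1 : 1 ≤ i) (h4 : i ≤ 4) : #{P ∈ planes | i ∈ P} = 3 := by
  interval_cases i <;> decide

lemma card_filter_mem_planeOf_eq_sum {E : Finset (Finset ℤ)}
    (hE : ∀ e ∈ E, planeOf e ∈ planes) (i : ℤ) :
    #{e ∈ E | i ∈ planeOf e} = ∑ P ∈ planes with i ∈ P, planeCount E P := by
  rw [card_eq_sum_card_fiberwise (f := planeOf) (t := {P ∈ planes | i ∈ P})]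
  · refine sum_congr rfl fun P hP => ?_
    rw [filter_filter, planeCount]
    exact congrArg card <| filter_congr fun e _ =>
      ⟨And.right, fun h => ⟨h ▸ (mem_filter.1 hP).2, h⟩⟩
  · intro e he
    rw [coe_filter, Set.mem_ofPred_eq] at he
    exact mem_filter.2 ⟨hE e he.1, he.2⟩

lemma SquaredStar.exists_mem_planeCount_ne_one {E : Finset (Finset ℤ)} (hE : SquaredStar E)
    {i : ℤ} (h1 : 1 ≤ i) (h4 : i ≤ 4) : ∃ P ∈ planes, i ∈ P ∧ planeCount E P ≠ 1 := by
  by_contra! h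
  have hsum : ∑ P ∈ planes with i ∈ P, planeCount E P = 3 := by
    rw [sum_congr rfl fun P hP => h P (mem_filter.1 hP).1 (mem_filter.1 hP).2, sum_const,
      smul_eq_mul, mul_one, card_planes_filter_mem h1 h4]
  have heven := hE.even_card_filter_mem_planeOf (by omega : 0 < i)
  rw [card_filter_mem_planeOf_eq_sum (fun e he => (hE.2.1 e he).planeOf_mem_planes), hsum]
    at heven
  exact absurd heven (by decide)

/-- No squared-star has 5 single faces in 5 different planes: the number of
planes containing exactly one face is at most 4. -/
theorem singles_at_most_four (E : Finset (Finset ℤ)) (hE : SquaredStar E) :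
    ((E.image planeOf).filter fun P => planeCount E P = 1).card ≤ 4 := by
  have hsingles : ((E.image planeOf).filter fun P => planeCount E P = 1) ⊆
      {P ∈ planes | planeCount E P = 1} := by
    intro P hP
    obtain ⟨hP, h1⟩ := mem_filter.1 hP
    obtain ⟨e, he, rfl⟩ := mem_image.1 hP
    exact mem_filter.2 ⟨(hE.2.1 e he).planeOf_mem_planes, h1⟩
  have hcover : (Icc 1 4 : Finset ℤ) ⊆ {P ∈ planes | ¬planeCount E P = 1}.biUnion id := by
    intro i hi
    obtain ⟨P, hP, hiP, hne⟩ := hE.exists_mem_planeCount_ne_one (mem_Icc.1 hi).1 (mem_Icc.1 hi).2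
    exact mem_biUnion.2 ⟨P, mem_filter.2 ⟨hP, hne⟩, hiP⟩
  have hnonsingles := card_le_mul_card_of_subset_biUnion
    (fun P hP => (card_eq_two_of_mem_planes P (mem_filter.1 hP).1).le) hcover
  have hsplit := card_filter_add_card_filter_not (s := planes) (planeCount E · = 1)
  have hplanes : #planes = 6 := rfl
  have hIcc : #(Icc 1 4 : Finset ℤ) = 4 := rfl
  have hsinglesCard := card_le_card hsingles
  omega
end
end

section
/- For every squared-star E and every plane P, at most 4 faces of E lie in P; and if exactly 4 faces of E lie in P, then E consists precisely of those 4 faces, namely E = {{a,b},{a,-b},{-a,b},{-a,-b}} for some a,b ∈ V with |a| ≠ |b| and P = {|a|,|b|} (so the signature of E is {4}). -/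
open scoped Classical
noncomputable section

/-! The faces of `E` in the plane `{|a|, |b|}` are among the four faces `{±a, ±b}` of a square,
so there are at most four. If all four lie in `E`, each vertex `±a`, `±b` already has its two
faces of `E` inside the square, so no other face of `E` meets the square; since `E` is
connected, `E` is the square. -/

theorem Finset.pair_ne_pair {α : Type*} [DecidableEq α] {x y z : α} (hyz : y ≠ z)
    (hyx : y ≠ x) : ({x, y} : Finset α) ≠ {x, z} := fun h => by
  have : y ∈ ({x, z} : Finset α) := h ▸ by simp
  simp_all

section Cycle

variable {α : Type*} [DecidableEq α] {E S : Finset (Finset α)}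

theorem mem_of_subset_of_card_filter_mem {v : α}
    (hdeg : (E.filter fun e => v ∈ e).card = 2) (hSE : S ⊆ E)
    (hS : 2 ≤ (S.filter fun e => v ∈ e).card) {e : Finset α} (he : e ∈ E) (hve : v ∈ e) :
    e ∈ S := by
  have hfilter : S.filter (fun e => v ∈ e) = E.filter (fun e => v ∈ e) :=
    Finset.eq_of_subset_of_card_le (Finset.filter_subset_filter _ hSE) (hdeg ▸ hS)
  exact Finset.mem_of_mem_filter e (hfilter ▸ Finset.mem_filter.2 ⟨he, hve⟩)

theorem subset_of_forall_meet_mem {f₀ : Finset α} (hf₀ : f₀ ∈ S)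
    (hconn : ∀ e ∈ E, ∀ f ∈ E,
      Relation.ReflTransGen (fun a b => a ∈ E ∧ b ∈ E ∧ (a ∩ b).Nonempty) e f)
    (hS : S ⊆ E) (hclosed : ∀ e ∈ E, ∀ f ∈ S, (e ∩ f).Nonempty → e ∈ S) : E ⊆ S := by
  intro e he
  have hpath := hconn e he f₀ (hS hf₀)
  clear he
  induction hpath using Relation.ReflTransGen.head_induction_on with
  | refl => exact hf₀
  | head hmeet _ ih => exact hclosed _ hmeet.1 _ ih hmeet.2.2

theorem eq_of_subset_of_two_le_card_filter_mem
    (hdeg : ∀ v, (∃ e ∈ E, v ∈ e) → (E.filter fun e => v ∈ e).card = 2)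
    (hconn : ∀ e ∈ E, ∀ f ∈ E,
      Relation.ReflTransGen (fun a b => a ∈ E ∧ b ∈ E ∧ (a ∩ b).Nonempty) e f)
    (hSE : S ⊆ E) (hS : S.Nonempty)
    (hSdeg : ∀ v, (∃ e ∈ S, v ∈ e) → 2 ≤ (S.filter fun e => v ∈ e).card) : E = S := by
  obtain ⟨f₀, hf₀⟩ := hS
  refine subset_antisymm (subset_of_forall_meet_mem hf₀ hconn hSE ?_) hSE
  rintro e he f hf ⟨v, hv⟩
  rw [Finset.mem_inter] at hv
  exact mem_of_subset_of_card_filter_mem (hdeg v ⟨e, he, hv.1⟩) hSE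
    (hSdeg v ⟨f, hf, hv.2⟩) he hv.1

end Cycle

def square (a b : ℤ) : Finset (Finset ℤ) := {{a, b}, {a, -b}, {-a, b}, {-a, -b}}

theorem card_square_le (a b : ℤ) : (square a b).card ≤ 4 := Finset.card_le_four

theorem planeOf_pair (a b : ℤ) : planeOf {a, b} = {|a|, |b|} := by
  simp [planeOf]

theorem pair_mem_square {a b x y : ℤ} (hx : |x| = |a|) (hy : |y| = |b|) :
    {x, y} ∈ square a b := by
  rcases abs_eq_abs.1 hx with rfl | rfl <;> rcases abs_eq_abs.1 hy with rfl | rfl <;>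
    simp [square]

theorem IsFace.mem_square {f : Finset ℤ} (hf : IsFace f) {a b : ℤ}
    (hplane : planeOf f = planeOf {a, b}) : f ∈ square a b := by
  obtain ⟨x, -, y, -, hxy, rfl⟩ := hf
  rw [planeOf_pair, planeOf_pair] at hplane
  have hx : |x| ∈ ({|a|, |b|} : Finset ℤ) := hplane ▸ by simp
  have hy : |y| ∈ ({|a|, |b|} : Finset ℤ) := hplane ▸ by simp
  simp only [Finset.mem_insert, Finset.mem_singleton] at hx hy
  rcases hx with hx | hx <;> rcases hy with hy | hy
  · exact absurd (hx.trans hy.symm) hxy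
  · exact pair_mem_square hx hy
  · exact Finset.pair_comm x y ▸ pair_mem_square hy hx
  · exact absurd (hx.trans hy.symm) hxy

theorem two_le_card_filter_mem_square {a b : ℤ} (ha : a ≠ 0) (hb : b ≠ 0) (hab : |a| ≠ |b|)
    {x : ℤ} (hx : ∃ e ∈ square a b, x ∈ e) :
    2 ≤ ((square a b).filter fun e => x ∈ e).card := by
  have hab' : a ≠ b ∧ a ≠ -b := by constructor <;> rintro rfl <;> simp at hab
  have hx' : x = a ∨ x = -a ∨ x = b ∨ x = -b := by
    obtain ⟨e, he, hxe⟩ := hx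
    simp only [square, Finset.mem_insert, Finset.mem_singleton] at he
    rcases he with rfl | rfl | rfl | rfl <;>
      simp only [Finset.mem_insert, Finset.mem_singleton] at hxe <;> omega
  apply Finset.one_lt_card.2
  rcases hx' with h | h | h | h <;> rw [h]
  · exact ⟨{a, b}, by simp [square], {a, -b}, by simp [square],
      Finset.pair_ne_pair (by omega) (by omega)⟩
  · exact ⟨{-a, b}, by simp [square], {-a, -b}, by simp [square],
      Finset.pair_ne_pair (by omega) (by omega)⟩
  · exact ⟨{b, a}, by simp [square, Finset.pair_comm], {b, -a},
      by simp [square, Finset.pair_comm], Finset.pair_ne_pair (by omega) (by omega)⟩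
  · exact ⟨{-b, a}, by simp [square, Finset.pair_comm], {-b, -a},
      by simp [square, Finset.pair_comm], Finset.pair_ne_pair (by omega) (by omega)⟩

/-- At most 4 faces of a squared-star lie in one plane, and if exactly 4 do,
the squared-star is a "square" `{{a,b},{a,-b},{-a,b},{-a,-b}}` in that plane. -/
theorem at_most_four_in_a_plane (E : Finset (Finset ℤ)) (hE : SquaredStar E)
    (P : Finset ℤ) :
    planeCount E P ≤ 4 ∧
    (planeCount E P = 4 →
      ∃ a ∈ Vset, ∃ b ∈ Vset, |a| ≠ |b| ∧
        E = ({({a, b} : Finset ℤ), {a, -b}, {-a, b}, {-a, -b}} :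
          Finset (Finset ℤ)) ∧
        P = {|a|, |b|}) := by
  obtain ⟨-, hface, hdeg, hconn⟩ := hE
  rcases (E.filter fun e => planeOf e = P).eq_empty_or_nonempty with hempty | ⟨e₀, he₀⟩
  · simp [planeCount, hempty]
  obtain ⟨he₀E, rfl⟩ := Finset.mem_filter.1 he₀
  obtain ⟨u, hu, v, hv, huv, rfl⟩ := hface _ he₀E
  have hsub : (E.filter fun e => planeOf e = planeOf {u, v}) ⊆ square u v :=
    fun f hf => (hface f (Finset.mem_of_mem_filter f hf)).mem_square (Finset.mem_filter.1 hf).2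
  refine ⟨(Finset.card_le_card hsub).trans (card_square_le u v),
    fun h4 => ⟨u, hu, v, hv, huv, ?_, planeOf_pair u v⟩⟩
  have hsquare : square u v ⊆ E :=
    Finset.eq_of_subset_of_card_le hsub ((card_square_le u v).trans_eq h4.symm) ▸
      Finset.filter_subset _ _
  have hVset : (0 : ℤ) ∉ Vset := by decide
  exact eq_of_subset_of_two_le_card_filter_mem hdeg hconn hsquare
    ⟨_, Finset.mem_insert_self _ _⟩ fun _ =>
      two_le_card_filter_mem_square (ne_of_mem_of_not_mem hu hVset)
        (ne_of_mem_of_not_mem hv hVset) huv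
end
end

section
/- Every squared-star with exactly 4 faces has signature {4}, {2,2}, or {1,1,1,1}, and each of these three signatures is realized by some squared-star with exactly 4 faces. -/
open scoped Classical
noncomputable section

/-!
A squared-star is a 2-regular family of pairs. With four faces it contains a path `d - a - b - c`;
the endpoints cannot coincide, since a triangle is closed under taking the faces through its
vertices and would leave the fourth face without a second face at its vertices, so the fourth
face is `{c, d}` and the squared-star is a 4-cycle `a b c d`. Its planes are `{|a|, |b|}`,
`{|b|, |c|}`, `{|c|, |d|}`, `{|d|, |a|}`: all four coincide when `|a| = |c|` and `|b| = |d|`, they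
form two distinct pairs when exactly one of these holds, and they are pairwise distinct otherwise.
-/

open Finset

theorem Finset.pair_eq_pair_iff {α : Type*} [DecidableEq α] {a b c d : α} :
    ({a, b} : Finset α) = {c, d} ↔ a = c ∧ b = d ∨ a = d ∧ b = c := by
  rw [← coe_inj, coe_pair, coe_pair, Set.pair_eq_pair_iff]

theorem Finset.exists_eq_pair_of_mem {α : Type*} [DecidableEq α] {e : Finset α} {v : α}
    (he : #e = 2) (hv : v ∈ e) : ∃ w, w ≠ v ∧ e = {v, w} := by
  obtain ⟨x, y, hxy, rfl⟩ := card_eq_two.1 he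
  rcases mem_insert.1 hv with rfl | hv
  · exact ⟨y, hxy.symm, rfl⟩
  · obtain rfl := mem_singleton.1 hv
    exact ⟨x, hxy, pair_comm _ _⟩

def fourCycle {α : Type*} [DecidableEq α] (a b c d : α) : Finset (Finset α) :=
  {{a, b}, {b, c}, {c, d}, {d, a}}

theorem fourCycle_rotate {α : Type*} [DecidableEq α] (a b c d : α) :
    fourCycle a b c d = fourCycle b c d a := by
  ext e; simp only [fourCycle, mem_insert, mem_singleton]; tauto

theorem card_fourCycle {α : Type*} [DecidableEq α] {a b c d : α} (hab : a ≠ b) (hbc : b ≠ c)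
    (hcd : c ≠ d) (hda : d ≠ a) (hac : a ≠ c) (hbd : b ≠ d) : #(fourCycle a b c d) = 4 := by
  rw [fourCycle, card_insert_of_notMem, card_insert_of_notMem, card_insert_of_notMem,
    card_singleton] <;> simp_all [pair_eq_pair_iff, eq_comm]

def IsTwoRegular {α : Type*} [DecidableEq α] (E : Finset (Finset α)) : Prop :=
  ∀ v : α, (∃ e ∈ E, v ∈ e) → (E.filter fun e => v ∈ e).card = 2

namespace IsTwoRegular

variable {α : Type*} [DecidableEq α] {E : Finset (Finset α)}

theorem exists_ne_mem {e : Finset α} {v : α} (hE : IsTwoRegular E) (he : e ∈ E) (hv : v ∈ e) :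
    ∃ f ∈ E, f ≠ e ∧ v ∈ f := by
  obtain ⟨f, hf, hfe⟩ := exists_mem_ne (by rw [hE v ⟨e, he, hv⟩]; norm_num) e
  exact ⟨f, (mem_filter.1 hf).1, hfe, (mem_filter.1 hf).2⟩

theorem eq_or_eq_of_mem {e f g : Finset α} {v : α} (hE : IsTwoRegular E) (he : e ∈ E)
    (hf : f ∈ E) (hef : e ≠ f) (hve : v ∈ e) (hvf : v ∈ f) (hg : g ∈ E) (hvg : v ∈ g) :
    g = e ∨ g = f := by
  by_contra! hne
  have hsub : {e, f, g} ⊆ E.filter fun e => v ∈ e := by simp [insert_subset_iff, *]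
  have := card_le_card hsub
  rw [hE v ⟨e, he, hve⟩,
    card_eq_three.2 ⟨e, f, g, hef, hne.1.symm, hne.2.symm, rfl⟩] at this
  omega

theorem not_triangle_subset (hE : IsTwoRegular E) (hpair : ∀ e ∈ E, #e = 2) (h4 : #E = 4)
    {a b c : α} (hab : a ≠ b) (hbc : b ≠ c) (hca : c ≠ a) :
    ¬{{a, b}, {b, c}, {c, a}} ⊆ E := by
  have hab_bc : ({a, b} : Finset α) ≠ {b, c} := by simp_all [pair_eq_pair_iff, eq_comm]
  have hab_ca : ({a, b} : Finset α) ≠ {c, a} := by simp_all [pair_eq_pair_iff, eq_comm]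
  have hbc_ca : ({b, c} : Finset α) ≠ {c, a} := by simp_all [pair_eq_pair_iff, eq_comm]
  set S : Finset (Finset α) := {{a, b}, {b, c}, {c, a}}
  intro hS
  have hrest : #(E \ S) = 1 := by
    rw [card_sdiff_of_subset hS, h4, card_eq_three.2 ⟨_, _, _, hab_bc, hab_ca, hbc_ca, rfl⟩]
  have hclosed : ∀ g ∈ E, ∀ v ∈ g, v = a ∨ v = b ∨ v = c → g ∈ S := by
    rintro g hg v hv (rfl | rfl | rfl)
    · rcases hE.eq_or_eq_of_mem (hS (by simp [S])) (hS (by simp [S])) hab_ca (by simp) (by simp)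
        hg hv with rfl | rfl <;> simp [S]
    · rcases hE.eq_or_eq_of_mem (hS (by simp [S])) (hS (by simp [S])) hab_bc (by simp) (by simp)
        hg hv with rfl | rfl <;> simp [S]
    · rcases hE.eq_or_eq_of_mem (hS (by simp [S])) (hS (by simp [S])) hbc_ca (by simp) (by simp)
        hg hv with rfl | rfl <;> simp [S]
  obtain ⟨f, hf⟩ := card_pos.1 (hrest ▸ one_pos)
  obtain ⟨hfE, hfS⟩ := mem_sdiff.1 hf
  obtain ⟨u, hu⟩ := card_pos.1 (hpair f hfE ▸ two_pos)
  obtain ⟨g, hgE, hgf, hug⟩ := hE.exists_ne_mem hfE hu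
  have hgS : g ∉ S := by
    intro hg
    refine hfS (hclosed f hfE u hu ?_)
    simp only [S, mem_insert, mem_singleton] at hg
    rcases hg with rfl | rfl | rfl <;> simp at hug <;> tauto
  exact hgf (card_le_one.1 hrest.le g (mem_sdiff.2 ⟨hgE, hgS⟩) f hf)

theorem eq_fourCycle_of_subset (hE : IsTwoRegular E) (hpair : ∀ e ∈ E, #e = 2) (h4 : #E = 4)
    {a b c d : α} (hbc : b ≠ c) (hcd : c ≠ d) (hda : d ≠ a) (hac : a ≠ c)
    (hbd : b ≠ d) (hS : {{a, b}, {b, c}, {d, a}} ⊆ E) : E = fourCycle a b c d := by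
  set S : Finset (Finset α) := {{a, b}, {b, c}, {d, a}}
  have hS3 : #S = 3 := card_eq_three.2 ⟨_, _, _, by simp_all [pair_eq_pair_iff, eq_comm],
    by simp_all [pair_eq_pair_iff, eq_comm], by simp_all [pair_eq_pair_iff, eq_comm], rfl⟩
  have hrest : #(E \ S) ≤ 1 := by rw [card_sdiff_of_subset hS, h4, hS3]
  -- the second faces at `c` and at `d` both lie outside `S`, so they coincide
  obtain ⟨x, hxE, hxbc, hcx⟩ :=
    hE.exists_ne_mem (hS (by simp [S])) (by simp : c ∈ ({b, c} : Finset α))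
  obtain ⟨y, hyE, hyda, hdy⟩ :=
    hE.exists_ne_mem (hS (by simp [S])) (by simp : d ∈ ({d, a} : Finset α))
  have hx : x ∈ E \ S := by
    simp only [S, mem_sdiff, mem_insert, mem_singleton, not_or]
    refine ⟨hxE, ?_, hxbc, ?_⟩ <;> rintro rfl <;> simp_all [eq_comm]
  have hy : y ∈ E \ S := by
    simp only [S, mem_sdiff, mem_insert, mem_singleton, not_or]
    refine ⟨hyE, ?_, ?_, hyda⟩ <;> rintro rfl <;> simp_all [eq_comm]
  have hdx : d ∈ x := card_le_one.1 hrest y hy x hx ▸ hdy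
  have hxcd : x = {c, d} :=
    (eq_of_subset_of_card_le (insert_subset hcx (singleton_subset_iff.2 hdx))
      (by rw [hpair x hxE, card_pair hcd])).symm
  have hrest' : E \ S = {x} :=
    eq_singleton_iff_unique_mem.2 ⟨hx, fun z hz => card_le_one.1 hrest z hz x hx⟩
  rw [← union_sdiff_of_subset hS, hrest', hxcd]
  ext e; simp only [S, fourCycle, mem_union, mem_insert, mem_singleton]; tauto

theorem exists_eq_fourCycle (hE : IsTwoRegular E) (hpair : ∀ e ∈ E, #e = 2) (h4 : #E = 4) :
    ∃ a b c d, a ≠ c ∧ b ≠ d ∧ E = fourCycle a b c d := by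
  obtain ⟨e, he⟩ := card_pos.1 (h4 ▸ four_pos)
  obtain ⟨a, b, hab, rfl⟩ := card_eq_two.1 (hpair e he)
  obtain ⟨f, hf, hfe, haf⟩ := hE.exists_ne_mem he (mem_insert_self a {b})
  obtain ⟨d, hda, rfl⟩ := exists_eq_pair_of_mem (hpair f hf) haf
  obtain ⟨g, hg, hge, hbg⟩ := hE.exists_ne_mem he (by simp : b ∈ ({a, b} : Finset α))
  obtain ⟨c, hcb, rfl⟩ := exists_eq_pair_of_mem (hpair g hg) hbg
  have hdb : d ≠ b := by rintro rfl; exact hfe rfl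
  have hca : c ≠ a := by rintro rfl; exact hge (pair_comm _ _)
  have hcd : c ≠ d := by
    rintro rfl
    exact hE.not_triangle_subset hpair h4 hab hcb.symm hca
      (by simp [insert_subset_iff, pair_comm c a, *])
  refine ⟨a, b, c, d, hca.symm, hdb.symm, hE.eq_fourCycle_of_subset hpair h4 hcb.symm hcd
    hda hca.symm hdb.symm ?_⟩
  simp [insert_subset_iff, pair_comm d a, *]

end IsTwoRegular

theorem isTwoRegular_fourCycle {α : Type*} [DecidableEq α] {a b c d : α} (hab : a ≠ b)
    (hbc : b ≠ c) (hcd : c ≠ d) (hda : d ≠ a) (hac : a ≠ c) (hbd : b ≠ d) :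
    IsTwoRegular (fourCycle a b c d) := by
  rintro v ⟨e, he, hve⟩
  simp only [fourCycle, mem_insert, mem_singleton] at he
  rcases he with rfl | rfl | rfl | rfl <;> simp only [mem_insert, mem_singleton] at hve <;>
    rcases hve with rfl | rfl <;>
    simp_all [fourCycle, filter_insert, filter_singleton, pair_eq_pair_iff, eq_comm]

theorem reflTransGen_fourCycle {α : Type*} [DecidableEq α] (a b c d : α) :
    ∀ e ∈ fourCycle a b c d, ∀ f ∈ fourCycle a b c d, Relation.ReflTransGen (fun x y =>
      x ∈ fourCycle a b c d ∧ y ∈ fourCycle a b c d ∧ (x ∩ y).Nonempty) e f := by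
  set C := fourCycle a b c d
  set R := fun x y => x ∈ C ∧ y ∈ C ∧ (x ∩ y).Nonempty
  have : Std.Symm R := ⟨fun x y ⟨hx, hy, hxy⟩ => ⟨hy, hx, inter_comm x y ▸ hxy⟩⟩
  obtain ⟨hab, hbc, hcd, hda⟩ :
      {a, b} ∈ C ∧ {b, c} ∈ C ∧ {c, d} ∈ C ∧ {d, a} ∈ C := by simp [C, fourCycle]
  have hfrom : ∀ e ∈ C, Relation.ReflTransGen R {a, b} e := by
    intro e he
    simp only [C, fourCycle, mem_insert, mem_singleton] at he
    rcases he with rfl | rfl | rfl | rfl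
    · exact .refl
    · exact .single ⟨hab, hbc, b, by simp⟩
    · exact .tail (.single ⟨hab, hbc, b, by simp⟩) ⟨hbc, hcd, c, by simp⟩
    · exact .single ⟨hab, hda, a, by simp⟩
  intro e he f hf
  exact (Relation.ReflTransGen.stdSymm.symm _ _ (hfrom e he)).trans (hfrom f hf)

theorem planeOf_pair_s7 (u v : ℤ) : planeOf {u, v} = {|u|, |v|} := by
  simp [planeOf]

theorem planeCount_union_of_notMem {S T : Finset (Finset ℤ)} {P : Finset ℤ}
    (hP : P ∉ T.image planeOf) : planeCount (S ∪ T) P = planeCount S P := by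
  rw [planeCount, filter_union,
    filter_false_of_mem fun e he hPe => hP (mem_image.2 ⟨e, he, hPe⟩), union_empty, planeCount]

theorem signatureOf_union {S T : Finset (Finset ℤ)}
    (h : Disjoint (S.image planeOf) (T.image planeOf)) :
    signatureOf (S ∪ T) = signatureOf S + signatureOf T := by
  rw [signatureOf, image_union, ← disjUnion_eq_union _ _ h, disjUnion_val, Multiset.map_add,
    signatureOf, signatureOf]
  congr 1
  · exact Multiset.map_congr rfl fun P hP =>
      planeCount_union_of_notMem (disjoint_left.1 h hP)
  · refine Multiset.map_congr rfl fun P hP => ?_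
    rw [union_comm]
    exact planeCount_union_of_notMem (disjoint_right.1 h hP)

theorem signatureOf_eq_singleton_card {E : Finset (Finset ℤ)} {P : Finset ℤ} (hE : E.Nonempty)
    (h : ∀ e ∈ E, planeOf e = P) : signatureOf E = {#E} := by
  have himage : E.image planeOf = {P} := by
    obtain ⟨e, he⟩ := hE
    exact eq_singleton_iff_unique_mem.2 ⟨h e he ▸ mem_image_of_mem _ he, by simpa using h⟩
  rw [signatureOf, himage]
  simp [planeCount, filter_true_of_mem h]

theorem signatureOf_eq_replicate {E : Finset (Finset ℤ)} (h : Set.InjOn planeOf E) :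
    signatureOf E = Multiset.replicate #E 1 := by
  have hcount : ∀ P ∈ (E.image planeOf).val, planeCount E P = 1 := by
    intro P hP
    obtain ⟨e, he, rfl⟩ := mem_image.1 hP
    rw [planeCount, card_eq_one]
    exact ⟨e, eq_singleton_iff_unique_mem.2
      ⟨mem_filter.2 ⟨he, rfl⟩, fun f hf => h (mem_filter.1 hf).1 he (mem_filter.1 hf).2⟩⟩
  rw [signatureOf, Multiset.map_congr rfl hcount, Multiset.map_const', card_val,
    card_image_iff.2 h]

theorem injOn_planeOf_fourCycle {a b c d : ℤ} (hab : |a| ≠ |b|) (hbc : |b| ≠ |c|)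
    (hcd : |c| ≠ |d|) (hda : |d| ≠ |a|) (hac : |a| ≠ |c|) (hbd : |b| ≠ |d|) :
    Set.InjOn planeOf (fourCycle a b c d : Set (Finset ℤ)) := by
  intro x hx y hy hxy
  simp only [fourCycle, coe_insert, coe_singleton, Set.mem_insert_iff,
    Set.mem_singleton_iff] at hx hy
  rcases hx with rfl | rfl | rfl | rfl <;> rcases hy with rfl | rfl | rfl | rfl <;>
    simp_all [planeOf_pair_s7, pair_eq_pair_iff, eq_comm]

theorem signatureOf_fourCycle_of_abs_eq {a b c d : ℤ} (hac : a ≠ c) (hac' : |a| = |c|)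
    (hbd' : |b| ≠ |d|) :
    signatureOf (fourCycle a b c d) = {2, 2} := by
  have hsplit : fourCycle a b c d = {{a, b}, {b, c}} ∪ {{c, d}, {d, a}} := by
    ext e; simp only [fourCycle, mem_union, mem_insert, mem_singleton]; tauto
  have hplanes : Disjoint (({{a, b}, {b, c}} : Finset (Finset ℤ)).image planeOf)
      (({{c, d}, {d, a}} : Finset (Finset ℤ)).image planeOf) := by
    simp_all [planeOf_pair_s7, pair_eq_pair_iff, eq_comm]
    exact fun h1 h2 => hbd' (h1.trans h2)
  have h1 : ({a, b} : Finset ℤ) ≠ {b, c} := by simp [pair_eq_pair_iff]; omega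
  have h2 : ({c, d} : Finset ℤ) ≠ {d, a} := by simp [pair_eq_pair_iff]; omega
  rw [hsplit, signatureOf_union hplanes,
    signatureOf_eq_singleton_card (P := {|a|, |b|}) (insert_nonempty _ _)
      (by simp_all [planeOf_pair_s7, pair_comm]),
    signatureOf_eq_singleton_card (P := {|a|, |d|}) (insert_nonempty _ _)
      (by simp_all [planeOf_pair_s7, pair_comm]),
    card_pair h1, card_pair h2]
  rfl

theorem signatureOf_fourCycle {a b c d : ℤ} (hab : |a| ≠ |b|) (hbc : |b| ≠ |c|)
    (hcd : |c| ≠ |d|) (hda : |d| ≠ |a|) (hac : a ≠ c) (hbd : b ≠ d) :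
    signatureOf (fourCycle a b c d) = {4} ∨ signatureOf (fourCycle a b c d) = {2, 2} ∨
      signatureOf (fourCycle a b c d) = {1, 1, 1, 1} := by
  have hcard : #(fourCycle a b c d) = 4 := by
    refine card_fourCycle ?_ ?_ ?_ ?_ hac hbd <;> rintro rfl <;> simp_all
  by_cases hac' : |a| = |c| <;> by_cases hbd' : |b| = |d|
  · left
    rw [← hcard]
    refine signatureOf_eq_singleton_card (P := {|a|, |b|}) (by simp [fourCycle]) ?_
    simp [fourCycle, planeOf_pair_s7, hac', hbd', pair_comm]
  · exact Or.inr (Or.inl (signatureOf_fourCycle_of_abs_eq hac hac' hbd'))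
  · rw [fourCycle_rotate]
    exact Or.inr (Or.inl (signatureOf_fourCycle_of_abs_eq hbd hbd' (Ne.symm hac')))
  · right; right
    rw [signatureOf_eq_replicate (injOn_planeOf_fourCycle hab hbc hcd hda hac' hbd'), hcard]
    rfl

theorem IsFace.card_eq_two {e : Finset ℤ} (he : IsFace e) : #e = 2 := by
  obtain ⟨u, -, v, -, huv, rfl⟩ := he
  exact card_pair fun h => huv (h ▸ rfl)

theorem IsFace.abs_ne {a b : ℤ} (h : IsFace {a, b}) : |a| ≠ |b| := by
  obtain ⟨u, -, v, -, huv, hab⟩ := h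
  intro habs
  have hconst : ∀ x ∈ ({a, b} : Finset ℤ), |x| = |a| := by simp [habs]
  exact huv ((hconst u (hab ▸ by simp)).trans (hconst v (hab ▸ by simp)).symm)

theorem squaredStar_fourCycle {a b c d : ℤ} (hV : {a, b, c, d} ⊆ Vset) (hab : |a| ≠ |b|)
    (hbc : |b| ≠ |c|) (hcd : |c| ≠ |d|) (hda : |d| ≠ |a|) (hac : a ≠ c) (hbd : b ≠ d) :
    SquaredStar (fourCycle a b c d) := by
  have hne : ∀ {u v : ℤ}, |u| ≠ |v| → u ≠ v := fun h huv => h (huv ▸ rfl)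
  simp only [insert_subset_iff, singleton_subset_iff] at hV
  obtain ⟨ha, hb, hc, hd⟩ := hV
  refine ⟨?_, ?_, isTwoRegular_fourCycle (hne hab) (hne hbc) (hne hcd) (hne hda) hac hbd,
    reflTransGen_fourCycle a b c d⟩
  · rw [card_fourCycle (hne hab) (hne hbc) (hne hcd) (hne hda) hac hbd]; norm_num
  · intro e he
    simp only [fourCycle, mem_insert, mem_singleton] at he
    rcases he with rfl | rfl | rfl | rfl
    · exact ⟨a, ha, b, hb, hab, rfl⟩
    · exact ⟨b, hb, c, hc, hbc, rfl⟩
    · exact ⟨c, hc, d, hd, hcd, rfl⟩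
    · exact ⟨d, hd, a, ha, hda, rfl⟩

/-- A squared-star with exactly 4 faces has signature `{4}`, `{2,2}` or
`{1,1,1,1}`, and each of these signatures is realized. -/
theorem signature_four_faces :
    (∀ E : Finset (Finset ℤ), SquaredStar E → E.card = 4 →
      signatureOf E = {4} ∨ signatureOf E = {2, 2} ∨
        signatureOf E = {1, 1, 1, 1}) ∧
    (∃ E : Finset (Finset ℤ), SquaredStar E ∧ E.card = 4 ∧
      signatureOf E = {4}) ∧
    (∃ E : Finset (Finset ℤ), SquaredStar E ∧ E.card = 4 ∧
      signatureOf E = {2, 2}) ∧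
    (∃ E : Finset (Finset ℤ), SquaredStar E ∧ E.card = 4 ∧
      signatureOf E = {1, 1, 1, 1}) := by
  refine ⟨fun E hE h4 => ?classification,
    ⟨fourCycle 1 2 (-1) (-2), squaredStar_fourCycle ?_ ?_ ?_ ?_ ?_ ?_ ?_, ?_, ?_⟩,
    ⟨fourCycle 1 2 (-1) 3, squaredStar_fourCycle ?_ ?_ ?_ ?_ ?_ ?_ ?_, ?_, ?_⟩,
    ⟨fourCycle 1 2 3 4, squaredStar_fourCycle ?_ ?_ ?_ ?_ ?_ ?_ ?_, ?_, ?_⟩⟩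
  case classification =>
    obtain ⟨-, hfaces, hreg, -⟩ := hE
    obtain ⟨a, b, c, d, hac, hbd, rfl⟩ :=
      IsTwoRegular.exists_eq_fourCycle hreg (fun e he => (hfaces e he).card_eq_two) h4
    have habs : ∀ {u v : ℤ}, {u, v} ∈ fourCycle a b c d → |u| ≠ |v| :=
      fun h => (hfaces _ h).abs_ne
    exact signatureOf_fourCycle (habs (by simp [fourCycle])) (habs (by simp [fourCycle]))
      (habs (by simp [fourCycle])) (habs (by simp [fourCycle])) hac hbd
  all_goals decide
end
end

section
/- There is no squared-star with exactly 7 faces whose signature is {2,2,2,1}: no squared-star with 7 faces has three planes each containing exactly two of its faces and one plane containing exactly one of its faces. -/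
open scoped Classical
noncomputable section

/-!
Fix a vertex `x` of a squared-star. The faces whose plane contains `|x|` are exactly the faces
through `x` or through `-x` (no face contains both), so there are `0 + 0`, `0 + 2` or `2 + 2`
of them. Grouping these faces by plane, their number is also the sum of the face counts of the
planes through `|x|`. With signature `{2,2,2,1}`, choosing `x` on the single face of the
odd plane makes that sum odd.
-/

lemma abs_mem_planeOf_iff {e : Finset ℤ} {x : ℤ} : |x| ∈ planeOf e ↔ x ∈ e ∨ -x ∈ e := by
  simp only [planeOf, Finset.mem_image, abs_eq_abs]
  constructor
  · rintro ⟨y, hy, rfl | rfl⟩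
    · exact Or.inl hy
    · exact Or.inr hy
  · rintro (h | h)
    · exact ⟨x, h, Or.inl rfl⟩
    · exact ⟨-x, h, Or.inr rfl⟩

lemma IsFace.exists_mem_ne_zero {e : Finset ℤ} (he : IsFace e) : ∃ x ∈ e, x ≠ 0 := by
  obtain ⟨u, hu, v, -, -, rfl⟩ := he
  exact ⟨u, Finset.mem_insert_self u {v}, by rintro rfl; simp [Vset] at hu⟩

lemma IsFace.neg_notMem {e : Finset ℤ} (he : IsFace e) {x : ℤ} (hx : x ≠ 0) (hxe : x ∈ e) :
    -x ∉ e := by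
  obtain ⟨u, -, v, -, huv, rfl⟩ := he
  simp only [Finset.mem_insert, Finset.mem_singleton] at hxe ⊢
  rintro (h | h) <;> rcases hxe with rfl | rfl
  · omega
  · exact huv (by rw [← h, abs_neg])
  · exact huv (by rw [← h, abs_neg])
  · omega

lemma card_filter_mem_planeOf_eq_sum_s12 (E : Finset (Finset ℤ)) (a : ℤ) :
    (E.filter fun e => a ∈ planeOf e).card =
      ∑ P ∈ (E.image planeOf).filter (a ∈ ·), planeCount E P := by
  rw [Finset.card_eq_sum_card_fiberwise (f := planeOf) (t := (E.image planeOf).filter (a ∈ ·))]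
  · refine Finset.sum_congr rfl fun P hP => congrArg Finset.card ?_
    rw [Finset.filter_filter]
    refine Finset.filter_congr fun e _ => ⟨And.right, fun h => ⟨h ▸ ?_, h⟩⟩
    exact (Finset.mem_filter.1 hP).2
  · intro e he
    obtain ⟨heE, ha⟩ := Finset.mem_filter.1 he
    exact Finset.mem_filter.2 ⟨Finset.mem_image_of_mem _ heE, ha⟩

namespace SquaredStar

variable {E : Finset (Finset ℤ)}

lemma even_card_filter_mem (hE : SquaredStar E) (v : ℤ) : Even (E.filter (v ∈ ·)).card := by
  rcases (E.filter (v ∈ ·)).eq_empty_or_nonempty with h | ⟨e, he⟩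
  · rw [h, Finset.card_empty]
    exact Even.zero
  · obtain ⟨heE, hv⟩ := Finset.mem_filter.1 he
    rw [hE.2.2.1 v ⟨e, heE, hv⟩]
    exact even_two

lemma even_card_filter_abs_mem_planeOf (hE : SquaredStar E) {x : ℤ} (hx : x ≠ 0) :
    Even (E.filter fun e => |x| ∈ planeOf e).card := by
  have hsplit : (E.filter fun e => |x| ∈ planeOf e) = E.filter (x ∈ ·) ∪ E.filter (-x ∈ ·) := by
    rw [← Finset.filter_or]
    exact Finset.filter_congr fun e _ => abs_mem_planeOf_iff
  have hdisj : Disjoint (E.filter (x ∈ ·)) (E.filter (-x ∈ ·)) :=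
    Finset.disjoint_filter.2 fun e he => (hE.2.1 e he).neg_notMem hx
  rw [hsplit, Finset.card_union_of_disjoint hdisj]
  exact (hE.even_card_filter_mem x).add (hE.even_card_filter_mem (-x))

lemma even_sum_planeCount (hE : SquaredStar E) {x : ℤ} (hx : x ≠ 0) :
    Even (∑ P ∈ (E.image planeOf).filter (|x| ∈ ·), planeCount E P) :=
  card_filter_mem_planeOf_eq_sum_s12 E |x| ▸ hE.even_card_filter_abs_mem_planeOf hx

end SquaredStar

lemma planeCount_eq_two_of_signatureOf_eq {E : Finset (Finset ℤ)}
    (hsig : signatureOf E = {2, 2, 2, 1}) {P₀ P : Finset ℤ} (hP₀ : P₀ ∈ E.image planeOf)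
    (hcount : planeCount E P₀ = 1) (hP : P ∈ E.image planeOf) (hne : P ≠ P₀) :
    planeCount E P = 2 := by
  have hrest : ((E.image planeOf).val.erase P₀).map (planeCount E) = {2, 2, 2} := by
    have h := hsig
    rw [signatureOf, ← Multiset.cons_erase hP₀, Multiset.map_cons, hcount,
      show ({2, 2, 2, 1} : Multiset ℕ) = 1 ::ₘ {2, 2, 2} by decide] at h
    exact Multiset.cons_inj_right 1 |>.1 h
  have hmem : P ∈ (E.image planeOf).val.erase P₀ :=
    ((E.image planeOf).nodup.mem_erase_iff).2 ⟨hne, hP⟩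
  have h := Multiset.mem_map_of_mem (planeCount E) hmem
  rw [hrest] at h
  simpa using h

theorem no_seven_face_signature_2221_general (E : Finset (Finset ℤ))
    (hE : SquaredStar E) :
    signatureOf E ≠ {2, 2, 2, 1} := by
  intro hsig
  obtain ⟨P₀, hP₀, hcount⟩ : ∃ P₀ ∈ E.image planeOf, planeCount E P₀ = 1 :=
    Multiset.mem_map.1 (show 1 ∈ signatureOf E by rw [hsig]; decide)
  obtain ⟨e₀, he₀, rfl⟩ := Finset.mem_image.1 hP₀
  obtain ⟨x, hx, hx0⟩ := (hE.2.1 e₀ he₀).exists_mem_ne_zero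
  have hodd : Odd (∑ P ∈ (E.image planeOf).filter (|x| ∈ ·), planeCount E P) := by
    have hP₀x : planeOf e₀ ∈ (E.image planeOf).filter (|x| ∈ ·) :=
      Finset.mem_filter.2 ⟨hP₀, abs_mem_planeOf_iff.2 (Or.inl hx)⟩
    rw [← Finset.add_sum_erase _ _ hP₀x, hcount]
    refine Even.one_add (Finset.even_sum _ fun P hP => ?_)
    obtain ⟨hne, hP⟩ := Finset.mem_erase.1 hP
    rw [planeCount_eq_two_of_signatureOf_eq hsig hP₀ hcount (Finset.mem_filter.1 hP).1 hne]
    exact even_two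
  exact Nat.not_even_iff_odd.2 hodd (hE.even_sum_planeCount hx0)

/-- No squared-star with exactly 7 faces has signature `{2,2,2,1}`. -/
theorem no_seven_face_signature_2221 (E : Finset (Finset ℤ))
    (hE : SquaredStar E) (hcard : E.card = 7) :
    signatureOf E ≠ {2, 2, 2, 1} :=
  no_seven_face_signature_2221_general E hE
end
end
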